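/- arXiv:2502.04754 — 9 statements merged into one kernel-verified Lean document; each statement's English description precedes it below -/
import Mathlib

section
/- Let (Ω, R) be a chemical network with substances Ω = {1,…,N} and reactions R ⊆ ℤ^N \ {0}, and let M = (span{R : R ∈ R})^⊥ ⊆ ℝ^N be its space of conservation laws. Then the following are equivalent: (1) there exists m ∈ M with m(j) > 0 for all j ∈ Ω (the network is conservative); (2) for every j ∈ Ω there exists m ∈ M ∩ ℝ_{≥0}^N with m(j) > 0. -/
open Finset

theorem stmt0_general (N : ℕ) (Rset : Finset (Fin N → ℤ)) :
    (∃ m : Fin N → ℝ, (∀ R ∈ Rset, ∑ i, m i * (R i : ℝ) = 0) ∧ ∀ j, 0 < m j) ↔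
    (∀ j : Fin N, ∃ m : Fin N → ℝ, (∀ R ∈ Rset, ∑ i, m i * (R i : ℝ) = 0) ∧
      (∀ i, 0 ≤ m i) ∧ 0 < m j) := by
  constructor
  · rintro ⟨m, hm, hpos⟩ j
    exact ⟨m, hm, fun i => (hpos i).le, hpos j⟩
  · intro h
    choose m hm hnonneg hpos using h
    -- The sum of the nonnegative witnesses, one per substance, is positive everywhere.
    refine ⟨∑ j, m j, fun R hR => ?_, fun i => ?_⟩
    · simp_rw [Finset.sum_apply, sum_mul]
      rw [sum_comm]
      exact sum_eq_zero fun j _ => hm j R hR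
    · rw [Finset.sum_apply]
      exact sum_pos' (fun j _ => hnonneg j i) ⟨i, mem_univ i, hpos i⟩

/-- For a chemical network with substances `Fin N` and nonzero integer
reactions `Rset`, whose conservation-law space `M` consists of the real vectors orthogonal to
all reactions, the following are equivalent: (1) there exists a strictly positive
conservation law (the network is conservative); (2) for every substance `j` there is a
nonnegative conservation law which is positive at `j`. -/
theorem stmt0 (N : ℕ) (Rset : Finset (Fin N → ℤ)) (hR : ∀ R ∈ Rset, R ≠ 0) :
    (∃ m : Fin N → ℝ, (∀ R ∈ Rset, ∑ i, m i * (R i : ℝ) = 0) ∧ ∀ j, 0 < m j) ↔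
    (∀ j : Fin N, ∃ m : Fin N → ℝ, (∀ R ∈ Rset, ∑ i, m i * (R i : ℝ) = 0) ∧
      (∀ i, 0 ≤ m i) ∧ 0 < m j) :=
  stmt0_general N Rset
end

section
/- Let (Ω, R, K) be a bidirectional kinetic system satisfying detailed balance, with reaction matrix 𝐑 and w(j) = log(K_{−R_j}/K_{R_j}). Then N* ∈ ℝ_{>0}^N satisfies J_R(N*) = 0 for all R ∈ R_s (where J_R(n) = K_R ∏_{i:R(i)<0} n_i^{−R(i)} − K_{−R} ∏_{i:R(i)>0} n_i^{R(i)}) if and only if N* = e^{−E} componentwise for some solution E ∈ ℝ^N of 𝐑^T E = w. -/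
open Finset Real

theorem Int.cast_toNat_neg_sub_toNat {R : Type*} [Ring R] (z : ℤ) :
    ((-z).toNat : R) - (z.toNat : R) = -z := by
  have h : ((-z).toNat : ℤ) - z.toNat = -z := by omega
  simpa only [Int.cast_sub, Int.cast_natCast, Int.cast_neg] using congrArg (Int.cast : ℤ → R) h

/-- In the coordinates `x = e^{-E}` both monomials of the flux are exponentials of linear
forms in `E`, so taking logarithms makes the balance condition linear. -/
theorem massAction_flux_exp_neg_eq_zero_iff {ι : Type*} [Fintype ι] (ν : ι → ℤ) {a b : ℝ}
    (ha : 0 < a) (hb : 0 < b) (E : ι → ℝ) :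
    a * ∏ i, exp (-E i) ^ (-(ν i)).toNat - b * ∏ i, exp (-E i) ^ (ν i).toNat = 0 ↔
      log (b / a) = ∑ i, (ν i : ℝ) * E i := by
  simp only [← exp_nat_mul, ← exp_sum]
  have hexponent : ∑ i, ((-(ν i)).toNat : ℝ) * -E i - ∑ i, ((ν i).toNat : ℝ) * -E i =
      ∑ i, (ν i : ℝ) * E i := by
    rw [← sum_sub_distrib]
    refine sum_congr rfl fun i _ => ?_
    linear_combination (-E i) * Int.cast_toNat_neg_sub_toNat (R := ℝ) (ν i)
  rw [sub_eq_zero, log_div hb.ne' ha.ne', ← hexponent]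
  conv_lhs => rw [← exp_log ha, ← exp_log hb, ← exp_add, ← exp_add, exp_eq_exp]
  constructor <;> intro h <;> linarith

theorem stmt6_general (N s : ℕ) (Rset : Finset (Fin N → ℤ)) (K : (Fin N → ℤ) → ℝ)
    (ρ : Fin s → Fin N → ℤ)
    (hbid : ∀ R ∈ Rset, -R ∈ Rset)
    (hK : ∀ R ∈ Rset, 0 < K R)
    (hmem : ∀ j, ρ j ∈ Rset)
    (Nstar : Fin N → ℝ) (hpos : ∀ i, 0 < Nstar i) :
    (∀ j : Fin s,
        K (ρ j) * ∏ i, Nstar i ^ ((-(ρ j i)).toNat)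
          - K (-(ρ j)) * ∏ i, Nstar i ^ ((ρ j i).toNat) = 0) ↔
    (∃ E : Fin N → ℝ,
        (∀ j : Fin s, Real.log (K (-(ρ j)) / K (ρ j)) = ∑ i, (ρ j i : ℝ) * E i) ∧
        ∀ i, Nstar i = Real.exp (-(E i))) := by
  have hflux j := massAction_flux_exp_neg_eq_zero_iff (ρ j) (hK _ (hmem j))
    (hK _ (hbid _ (hmem j)))
  obtain ⟨E, rfl⟩ : ∃ E : Fin N → ℝ, Nstar = fun i => exp (-E i) :=
    ⟨fun i => -log (Nstar i), funext fun i => by rw [neg_neg, exp_log (hpos i)]⟩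
  constructor
  · exact fun h => ⟨E, fun j => (hflux j E).1 (h j), fun _ => rfl⟩
  · rintro ⟨E', hE', hEE'⟩ j
    obtain rfl : E' = E := funext fun i => by simpa using (hEE' i).symm
    exact (hflux j E').2 (hE' j)

/-- For a bidirectional kinetic system satisfying detailed balance, a
positive state `N*` has all fluxes vanishing (`J_R(N*) = 0` for all representatives `ρ j`)
if and only if `N* = e^{-E}` componentwise for some solution `E` of `𝐑ᵀ E = w`, where
`w j = log(K_{-ρ j}/K_{ρ j})`. -/
theorem stmt6 (N s : ℕ) (Rset : Finset (Fin N → ℤ)) (K : (Fin N → ℤ) → ℝ)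
    (ρ : Fin s → Fin N → ℤ)
    (h0 : ∀ R ∈ Rset, R ≠ 0)
    (hbid : ∀ R ∈ Rset, -R ∈ Rset)
    (hK : ∀ R ∈ Rset, 0 < K R)
    (hmem : ∀ j, ρ j ∈ Rset)
    (hDB : ∃ Nb : Fin N → ℝ, (∀ i, 0 < Nb i) ∧ ∀ R ∈ Rset,
        K R * ∏ i, Nb i ^ ((-(R i)).toNat) = K (-R) * ∏ i, Nb i ^ ((R i).toNat))
    (Nstar : Fin N → ℝ) (hpos : ∀ i, 0 < Nstar i) :
    (∀ j : Fin s,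
        K (ρ j) * ∏ i, Nstar i ^ ((-(ρ j i)).toNat)
          - K (-(ρ j)) * ∏ i, Nstar i ^ ((ρ j i).toNat) = 0) ↔
    (∃ E : Fin N → ℝ,
        (∀ j : Fin s, Real.log (K (-(ρ j)) / K (ρ j)) = ∑ i, (ρ j i : ℝ) * E i) ∧
        ∀ i, Nstar i = Real.exp (-(E i))) :=
  stmt6_general N s Rset K ρ hbid hK hmem Nstar hpos
end

section
/- Let (Ω, R, K) be a bidirectional kinetic system satisfying detailed balance with energy vector E (i.e. 𝐑^T E = w). Define the dissipation D(n) := ∑_{R ∈ R_s} K_R ∏_{i:R(i)<0} n_i^{−R(i)} · (∏_{j∈Ω} n_j^{R(j)} e^{R(j)E(j)} − 1) · log(∏_{j∈Ω} n_j^{R(j)} e^{R(j)E(j)}) for n ∈ ℝ_{>0}^N. Then D(n) ≥ 0 for all n ∈ ℝ_{>0}^N, and D(n) = 0 if n = e^{−E} componentwise. -/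
/-!
Each summand of `D n` is a nonnegative prefactor times `(x - 1) * log x`, where
`x = ∏ i, n i ^ ρ i * exp (ρ i * E i)` is positive; `x - 1` and `log x` always have the same
sign. At `n = exp (-E)` every factor of `x` equals `1`, so every summand vanishes.
-/

open Finset

theorem Real.sub_one_mul_log_nonneg {x : ℝ} (hx : 0 < x) : 0 ≤ (x - 1) * Real.log x := by
  rcases le_or_gt 1 x with h | h
  · exact mul_nonneg (sub_nonneg.2 h) (Real.log_nonneg h)
  · exact mul_nonneg_of_nonpos_of_nonpos (sub_nonpos.2 h.le) (Real.log_nonpos hx.le h.le)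

theorem mul_sub_one_mul_log_nonneg {c x : ℝ} (hc : 0 ≤ c) (hx : 0 < x) :
    0 ≤ c * (x - 1) * Real.log x := by
  rw [mul_assoc]
  exact mul_nonneg hc (Real.sub_one_mul_log_nonneg hx)

theorem Real.exp_neg_zpow_mul_exp_intCast_mul (a : ℝ) (k : ℤ) :
    Real.exp (-a) ^ k * Real.exp (k * a) = 1 := by
  rw [← Real.rpow_intCast, ← Real.exp_mul, ← Real.exp_add, Real.exp_eq_one_iff]
  ring

section

variable {ι : Type*} [Fintype ι]

theorem prod_zpow_mul_exp_pos {n : ι → ℝ} (hn : ∀ i, 0 < n i) (r : ι → ℤ) (E : ι → ℝ) :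
    0 < ∏ i, n i ^ r i * Real.exp (r i * E i) :=
  prod_pos fun i _ => mul_pos (zpow_pos (hn i) _) (Real.exp_pos _)

theorem prod_exp_neg_zpow_mul_exp_eq_one (r : ι → ℤ) (E : ι → ℝ) :
    ∏ i, Real.exp (-E i) ^ r i * Real.exp (r i * E i) = 1 :=
  prod_eq_one fun i _ => Real.exp_neg_zpow_mul_exp_intCast_mul (E i) (r i)

end

theorem stmt8_general (N s : ℕ) (Rset : Finset (Fin N → ℤ)) (K : (Fin N → ℤ) → ℝ)
    (ρ : Fin s → Fin N → ℤ)
    (hK : ∀ R ∈ Rset, 0 < K R)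
    (hmem : ∀ j, ρ j ∈ Rset)
    (E : Fin N → ℝ)
    (D : (Fin N → ℝ) → ℝ)
    (hD : D = fun n => ∑ j : Fin s,
        K (ρ j) * (∏ i, n i ^ ((-(ρ j i)).toNat)) *
          ((∏ i, n i ^ (ρ j i) * Real.exp ((ρ j i : ℝ) * E i)) - 1) *
          Real.log (∏ i, n i ^ (ρ j i) * Real.exp ((ρ j i : ℝ) * E i))) :
    (∀ n : Fin N → ℝ, (∀ i, 0 < n i) → 0 ≤ D n) ∧
    D (fun i => Real.exp (-(E i))) = 0 := by
  subst hD
  refine ⟨fun n hn => sum_nonneg fun j _ => ?_, sum_eq_zero fun j _ => ?_⟩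
  · have hprefactor : 0 ≤ K (ρ j) * ∏ i, n i ^ (-(ρ j i)).toNat :=
      mul_nonneg (hK _ (hmem j)).le (prod_nonneg fun i _ => pow_nonneg (hn i).le _)
    exact mul_sub_one_mul_log_nonneg hprefactor (prod_zpow_mul_exp_pos hn (ρ j) E)
  · simp only [prod_exp_neg_zpow_mul_exp_eq_one, sub_self, mul_zero, zero_mul]

/-- For a bidirectional kinetic system with detailed balance and energy
vector `E` (so `log(K_{-R}/K_R) = ∑ i, R i · E i` on representatives), the dissipation
`D(n) = ∑_j K_{ρ j} ∏_{i:ρji<0} n_i^{-ρji} (∏_i n_i^{ρji} e^{ρji E i} − 1)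
        · log(∏_i n_i^{ρji} e^{ρji E i})`
is nonnegative on positive states, and `D(e^{-E}) = 0`. -/
theorem stmt8 (N s : ℕ) (Rset : Finset (Fin N → ℤ)) (K : (Fin N → ℤ) → ℝ)
    (ρ : Fin s → Fin N → ℤ)
    (h0 : ∀ R ∈ Rset, R ≠ 0)
    (hbid : ∀ R ∈ Rset, -R ∈ Rset)
    (hK : ∀ R ∈ Rset, 0 < K R)
    (hmem : ∀ j, ρ j ∈ Rset)
    (E : Fin N → ℝ)
    (hE : ∀ j : Fin s, Real.log (K (-(ρ j)) / K (ρ j)) = ∑ i, (ρ j i : ℝ) * E i)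
    (D : (Fin N → ℝ) → ℝ)
    (hD : D = fun n => ∑ j : Fin s,
        K (ρ j) * (∏ i, n i ^ ((-(ρ j i)).toNat)) *
          ((∏ i, n i ^ (ρ j i) * Real.exp ((ρ j i : ℝ) * E i)) - 1) *
          Real.log (∏ i, n i ^ (ρ j i) * Real.exp ((ρ j i : ℝ) * E i))) :
    (∀ n : Fin N → ℝ, (∀ i, 0 < n i) → 0 ≤ D n) ∧
    D (fun i => Real.exp (-(E i))) = 0 :=
  stmt8_general N s Rset K ρ hK hmem E D hD
end

section
/- Let 𝐑 ∈ ℤ^{N×s} be a matrix written in block-row form 𝐑 = (π_V 𝐑; π_U 𝐑) corresponding to a partition Ω = V ⊔ U. If ker(π_V 𝐑) ⊆ ker(π_U 𝐑), then the projection map p sending each c ∈ ker(𝐑) to the vector p[c] (with p[c](j) := ∑_{i : π_V R_i = R̄_j} c(i), where R̄_1,…,R̄_v are the distinct nonzero projections π_V R_i) maps ker(𝐑) onto ker(𝐑_V), i.e. p(ker 𝐑) = ker(𝐑_V), where 𝐑_V is the matrix with columns R̄_1,…,R̄_v. -/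
/-!
For `⊆`: the fibers of `i ↦ π_V ρ i` are disjoint (because `Rbar` is injective and vanishes on
`U`), and every reaction outside them has `π_V ρ i = 0`, so regrouping `∑ i, c i • ρ i` by fibers
shows that `p[c]` lies in `ker 𝐑_V`. For `⊇`: choose for each `j` one reaction `rep j` with
`π_V ρ (rep j) = Rbar j`, and put `c i := ∑_{rep j = i} d j`. Then `π_V 𝐑 c = 𝐑_V d = 0`, hence
`π_U 𝐑 c = 0` by `ker (π_V 𝐑) ⊆ ker (π_U 𝐑)`, and `p[c] = d` since `rep j` lies in the fiber of
`j` only.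
-/

open Finset Function

section FiberSums

variable {ι κ R : Type*} [Fintype ι] [Fintype κ] [CommSemiring R]

theorem sum_sum_fiber_mul [DecidableEq ι] (rep : κ → ι) (d : κ → R) (x : ι → R) :
    ∑ i, (∑ j with rep j = i, d j) * x i = ∑ j, d j * x (rep j) := by
  simp_rw [Finset.sum_mul]
  rw [← Finset.sum_fiberwise univ rep (fun j => d j * x (rep j))]
  refine Finset.sum_congr rfl fun i _ => Finset.sum_congr rfl fun j hj => ?_
  rw [(mem_filter.1 hj).2]

theorem sum_sum_mul_eq_sum_mul_of_pairwiseDisjoint {F : κ → Finset ι}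
    (hF : Pairwise (Disjoint on F)) {x : ι → R} {y : κ → R}
    (hxy : ∀ j, ∀ i ∈ F j, x i = y j) (hx : ∀ i, x i ≠ 0 → ∃ j, i ∈ F j) (c : ι → R) :
    ∑ j, (∑ i ∈ F j, c i) * y j = ∑ i, c i * x i := by
  classical
  calc ∑ j, (∑ i ∈ F j, c i) * y j = ∑ i ∈ univ.biUnion F, c i * x i := by
        rw [sum_biUnion fun j _ j' _ h => hF h]
        refine Finset.sum_congr rfl fun j _ => ?_
        rw [Finset.sum_mul]
        exact Finset.sum_congr rfl fun i hi => by rw [hxy j i hi]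
    _ = ∑ i, c i * x i := by
        refine Finset.sum_subset (subset_univ _) fun i _ hi => ?_
        by_contra hci
        obtain ⟨j, hij⟩ := hx i (right_ne_zero_of_mul hci)
        exact hi (mem_biUnion.2 ⟨j, mem_univ j, hij⟩)

end FiberSums

section Reduction

variable {ι κ σ : Type*} {U : Set σ} {ρ : ι → σ → ℤ} {Rbar : κ → σ → ℤ} {F : κ → Finset ι}

theorem eq_of_eqOn_compl (hsupp : ∀ j, ∀ k ∈ U, Rbar j k = 0) (hinj : Injective Rbar)
    {j j' : κ} (h : Set.EqOn (Rbar j) (Rbar j') Uᶜ) : j = j' := by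
  refine hinj (funext fun k => ?_)
  by_cases hk : k ∈ U
  · rw [hsupp j k hk, hsupp j' k hk]
  · exact h hk

theorem pairwiseDisjoint_fibers (hF : ∀ j i, i ∈ F j ↔ Set.EqOn (ρ i) (Rbar j) Uᶜ)
    (hsupp : ∀ j, ∀ k ∈ U, Rbar j k = 0) (hinj : Injective Rbar) :
    Pairwise (Disjoint on F) := by
  intro j j' hjj'
  refine Finset.disjoint_left.2 fun i hi hi' => hjj' (eq_of_eqOn_compl hsupp hinj ?_)
  exact ((hF j i).1 hi).symm.trans ((hF j' i).1 hi')

theorem sum_fiber_mul_reduced_eq_zero [Fintype ι] [Fintype κ] {R : Type*} [CommRing R]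
    (hF : ∀ j i, i ∈ F j ↔ Set.EqOn (ρ i) (Rbar j) Uᶜ)
    (hsupp : ∀ j, ∀ k ∈ U, Rbar j k = 0) (hinj : Injective Rbar)
    (hcover : ∀ i, (∃ k, k ∉ U ∧ ρ i k ≠ 0) → ∃ j, Set.EqOn (Rbar j) (ρ i) Uᶜ)
    {c : ι → R} (hc : ∀ k, ∑ i, c i * (ρ i k : R) = 0) (k : σ) :
    ∑ j, (∑ i ∈ F j, c i) * (Rbar j k : R) = 0 := by
  by_cases hk : k ∈ U
  · simp [hsupp _ k hk]
  rw [← hc k]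
  refine sum_sum_mul_eq_sum_mul_of_pairwiseDisjoint (pairwiseDisjoint_fibers hF hsupp hinj)
    (fun j i hi => by rw [(hF j i).1 hi hk]) (fun i hi => ?_) c
  obtain ⟨j, hj⟩ := hcover i ⟨k, hk, fun h => hi (by rw [h, Int.cast_zero])⟩
  exact ⟨j, (hF j i).2 hj.symm⟩

theorem exists_ker_sum_fiber_eq [Fintype ι] [Fintype κ] {R : Type*} [CommRing R]
    (hF : ∀ j i, i ∈ F j ↔ Set.EqOn (ρ i) (Rbar j) Uᶜ)
    (hsupp : ∀ j, ∀ k ∈ U, Rbar j k = 0) (hinj : Injective Rbar)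
    (honto : ∀ j, ∃ i, Set.EqOn (Rbar j) (ρ i) Uᶜ)
    (hker : ∀ c : ι → R, (∀ k, k ∉ U → ∑ i, c i * (ρ i k : R) = 0) →
      ∀ k ∈ U, ∑ i, c i * (ρ i k : R) = 0)
    {d : κ → R} (hd : ∀ k, ∑ j, d j * (Rbar j k : R) = 0) :
    ∃ c : ι → R, (∀ k, ∑ i, c i * (ρ i k : R) = 0) ∧ ∀ j, d j = ∑ i ∈ F j, c i := by
  classical
  choose rep hrep using honto
  have hV : ∀ k ∉ U, ∑ i, (∑ j with rep j = i, d j) * (ρ i k : R) = 0 := fun k hk => by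
    rw [sum_sum_fiber_mul rep d (fun i => (ρ i k : R)), ← hd k]
    exact Finset.sum_congr rfl fun j _ => by rw [hrep j hk]
  refine ⟨fun i => ∑ j with rep j = i, d j, fun k => ?_, fun j => ?_⟩
  · by_cases hk : k ∈ U
    · exact hker _ hV k hk
    · exact hV k hk
  · have hfiber : ({j' | rep j' ∈ F j} : Finset κ) = {j} := by
      ext j'
      simp only [mem_filter, mem_univ, true_and, mem_singleton, hF]
      exact ⟨fun h => eq_of_eqOn_compl hsupp hinj ((hrep j').trans h),
        fun h => h ▸ (hrep j').symm⟩
    dsimp only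
    rw [sum_fiberwise_eq_sum_filter univ (F j) rep d, hfiber, sum_singleton]

end Reduction

theorem stmt10_general (N s v : ℕ) (U : Finset (Fin N)) (ρ : Fin s → Fin N → ℤ)
    (Rbar : Fin v → Fin N → ℤ)
    (hsupp : ∀ j, ∀ i ∈ U, Rbar j i = 0)
    (hinj : Function.Injective Rbar)
    (hcover : ∀ i : Fin s, (∃ k, k ∉ U ∧ ρ i k ≠ 0) → ∃ j, ∀ k, k ∉ U → Rbar j k = ρ i k)
    (honto : ∀ j, ∃ i, ∀ k, k ∉ U → Rbar j k = ρ i k)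
    (hker : ∀ c : Fin s → ℝ, (∀ k, k ∉ U → ∑ i, c i * (ρ i k : ℝ) = 0) →
        ∀ k ∈ U, ∑ i, c i * (ρ i k : ℝ) = 0) :
    {d : Fin v → ℝ | ∃ c : Fin s → ℝ, (∀ k, ∑ i, c i * (ρ i k : ℝ) = 0) ∧
        ∀ j, d j = ∑ i ∈ Finset.univ.filter (fun i => ∀ k, k ∉ U → ρ i k = Rbar j k), c i}
      = {d : Fin v → ℝ | ∀ k, ∑ j, d j * (Rbar j k : ℝ) = 0} := by
  have hF : ∀ j i, i ∈ univ.filter (fun i => ∀ k, k ∉ U → ρ i k = Rbar j k) ↔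
      Set.EqOn (ρ i) (Rbar j) (U : Set (Fin N))ᶜ := fun j i => by
    simp only [mem_filter, mem_univ, true_and]
    rfl
  ext d
  constructor
  · rintro ⟨c, hc, hd⟩
    obtain rfl : d = _ := funext hd
    exact sum_fiber_mul_reduced_eq_zero hF hsupp hinj hcover hc
  · exact exists_ker_sum_fiber_eq hF hsupp hinj honto hker

/-- Block decomposition `𝐑 = (π_V 𝐑; π_U 𝐑)` for the partition
`Ω = V ⊔ U` (here `V = Uᶜ`). The reduced reaction matrix has columns `Rbar 1,…,Rbar v`,
the distinct nonzero projections `π_V (ρ i)`. If `ker (π_V 𝐑) ⊆ ker (π_U 𝐑)`, then the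
cycle projection `p`, with `p[c] j = ∑_{i : π_V (ρ i) = Rbar j} c i`, maps `ker 𝐑` onto
`ker 𝐑_V`: the set of projections of cycles equals the cycle space of the reduced network. -/
theorem stmt10 (N s v : ℕ) (U : Finset (Fin N)) (ρ : Fin s → Fin N → ℤ)
    (Rbar : Fin v → Fin N → ℤ)
    (hsupp : ∀ j, ∀ i ∈ U, Rbar j i = 0)
    (hne : ∀ j, Rbar j ≠ 0)
    (hinj : Function.Injective Rbar)
    (hcover : ∀ i : Fin s, (∃ k, k ∉ U ∧ ρ i k ≠ 0) → ∃ j, ∀ k, k ∉ U → Rbar j k = ρ i k)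
    (honto : ∀ j, ∃ i, ∀ k, k ∉ U → Rbar j k = ρ i k)
    (hker : ∀ c : Fin s → ℝ, (∀ k, k ∉ U → ∑ i, c i * (ρ i k : ℝ) = 0) →
        ∀ k ∈ U, ∑ i, c i * (ρ i k : ℝ) = 0) :
    {d : Fin v → ℝ | ∃ c : Fin s → ℝ, (∀ k, ∑ i, c i * (ρ i k : ℝ) = 0) ∧
        ∀ j, d j = ∑ i ∈ Finset.univ.filter (fun i => ∀ k, k ∉ U → ρ i k = Rbar j k), c i}
      = {d : Fin v → ℝ | ∀ k, ∑ j, d j * (Rbar j k : ℝ) = 0} :=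
  stmt10_general N s v U ρ Rbar hsupp hinj hcover honto hker
end

section
/- Let (Ω, R, K) be a bidirectional kinetic system satisfying detailed balance, U ⊆ Ω, V = Ω \ U, and n_U ∈ ℝ_{>0}^{|U|}. Let (V, R_V, K[n_U]) be the reduced kinetic system with rates K_R̄[n_U] := ∑_{R ∈ π_V^{-1}(R̄)} K_R ∏_{s ∈ U, R(s)<0} n_s^{−R(s)}. Suppose every substance in U that appears in a reaction R ∈ R with π_V R belonging to a cycle of the reduced network satisfies n_s = e^{−E(s)}, where E is an energy of (Ω, R, K) (a solution of 𝐑^T E = w). Then the reduced kinetic system (V, R_V, K[n_U]) satisfies the detailed balance property. -/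
open Finset

/-- Projection of a reaction onto the complement of `U`, zeroing the coordinates in `U`. -/
def projV {N : ℕ} (U : Finset (Fin N)) (R : Fin N → ℤ) : Fin N → ℤ :=
  fun k => if k ∈ U then 0 else R k

/-- The `U`-reduced reaction set: nonzero projections of the reactions. -/
noncomputable def RV {N : ℕ} (Rset : Finset (Fin N → ℤ)) (U : Finset (Fin N)) :
    Finset (Fin N → ℤ) :=
  (Rset.image (projV U)).erase 0

/-- The reduced rate of a reduced reaction `Rb`: the sum, over reactions projecting to `Rb`,
of the original rate times the monomial of frozen concentrations of reactant species. -/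
noncomputable def Kred {N : ℕ} (Rset : Finset (Fin N → ℤ)) (U : Finset (Fin N))
    (K : (Fin N → ℤ) → ℝ) (n : Fin N → ℝ) (Rb : Fin N → ℤ) : ℝ :=
  ∑ R ∈ Rset.filter (fun R => projV U R = Rb), K R * ∏ t ∈ U, n t ^ ((-(R t)).toNat)

/-- `c` is a cycle of the `U`-reduced network. -/
noncomputable def IsRedCycle {N : ℕ} (Rset : Finset (Fin N → ℤ)) (U : Finset (Fin N))
    (c : (Fin N → ℤ) → ℝ) : Prop :=
  ∀ k : Fin N, ∑ Rb ∈ RV Rset U, c Rb * (Rb k : ℝ) = 0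

/-!
For a reduced reaction `Rb` on a cycle, every reaction `R` projecting to it involves only frozen
species sitting at `e^{-E}`, so reindexing `R ↦ -R` shows that each term of the reduced rate of
`-Rb` is `e^{⟨Rb, E⟩}` times the matching term for `Rb`. Hence the reduced log-ratios agree with
`⟨Rb, E⟩` on the support of every cycle, so they are orthogonal to all cycles. By the Fredholm
alternative they are then of the form `⟨Rb, F⟩` for some `F`, and `x = e^{-F}` is a positive
detailed-balanced state of the reduced system.
-/

open Real

theorem exists_potential_of_forall_cycle {α κ : Type*} [Fintype κ] (S : Finset α)
    (A : α → κ → ℝ) (w : α → ℝ)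
    (h : ∀ c : α → ℝ, (∀ k, ∑ j ∈ S, c j * A j k = 0) → ∑ j ∈ S, c j * w j = 0) :
    ∃ F : κ → ℝ, ∀ j ∈ S, w j = ∑ k, A j k * F k := by
  classical
  let T := (Matrix.of fun (j : S) k => A j k).mulVecLin
  suffices hw : (fun j : S => w j) ∈ LinearMap.range T by
    obtain ⟨F, hF⟩ := hw
    exact ⟨F, fun j hj => (congrFun hF ⟨j, hj⟩).symm⟩
  -- a functional separating `w` from the range of `T` is given by a cycle `c` with `∑ c w ≠ 0`
  by_contra hw
  obtain ⟨f, hfw, hTf⟩ := Submodule.exists_le_ker_of_notMem hw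
  let c : α → ℝ := fun j => if hj : j ∈ S then f (Pi.single ⟨j, hj⟩ 1) else 0
  have hf : ∀ v : α → ℝ, f (fun j : S => v j) = ∑ j ∈ S, c j * v j := by
    intro v
    rw [f.pi_apply_eq_sum_univ, ← sum_coe_sort S]
    refine sum_congr rfl fun j _ => ?_
    simp only [c, j.2, dite_true, smul_eq_mul, mul_comm (v j)]
    congr 2
    ext i
    simp [Pi.single_apply, eq_comm]
  refine hfw ((hf w).trans (h c fun k => ?_))
  rw [← hf]
  exact hTf ⟨Pi.single k 1, by ext j; simp [T]⟩

theorem eq_mul_exp_of_log_div_eq {a b s : ℝ} (ha : 0 < a) (hb : 0 < b) (h : log (b / a) = s) :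
    b = a * exp s := by
  rw [← h, exp_log (div_pos hb ha)]
  field_simp

theorem exp_neg_pow_toNat_neg (a : ℤ) (e : ℝ) :
    exp (-e) ^ (-a).toNat = exp (a * e) * exp (-e) ^ a.toNat := by
  rw [← exp_nat_mul, ← exp_nat_mul, ← exp_add]
  have h : (a.toNat : ℝ) - ((-a).toNat : ℝ) = a := by exact_mod_cast Int.toNat_sub_toNat_neg a
  congr 1
  linear_combination e * h

theorem prod_pow_toNat_neg_eq_exp_mul {ι : Type*} {s : Finset ι} {a : ι → ℤ} {x e : ι → ℝ}
    (hx : ∀ i ∈ s, a i ≠ 0 → x i = exp (-e i)) :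
    ∏ i ∈ s, x i ^ (-a i).toNat = exp (∑ i ∈ s, a i * e i) * ∏ i ∈ s, x i ^ (a i).toNat := by
  rw [exp_sum, ← prod_mul_distrib]
  refine prod_congr rfl fun i hi => ?_
  by_cases ha : a i = 0
  · simp [ha]
  · rw [hx i hi ha, exp_neg_pow_toNat_neg]

theorem sum_mul_eq_zero_of_cycle {ι : Type*} [Fintype ι] (S : Finset (ι → ℤ))
    (c w : (ι → ℤ) → ℝ) (E : ι → ℝ) (hc : ∀ i, ∑ R ∈ S, c R * (R i : ℝ) = 0)
    (hw : ∀ R ∈ S, c R ≠ 0 → w R = ∑ i, (R i : ℝ) * E i) :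
    ∑ R ∈ S, c R * w R = 0 :=
  calc ∑ R ∈ S, c R * w R = ∑ R ∈ S, c R * ∑ i, (R i : ℝ) * E i := by
        refine sum_congr rfl fun R hR => ?_
        by_cases hcR : c R = 0
        · simp [hcR]
        · rw [hw R hR hcR]
    _ = ∑ i, (∑ R ∈ S, c R * (R i : ℝ)) * E i := by
        simp_rw [mul_sum, sum_mul]
        rw [sum_comm]
        exact sum_congr rfl fun i _ => sum_congr rfl fun R _ => by ring
    _ = 0 := by simp [hc]

theorem exists_detailed_balance_of_cycle {ι : Type*} [Fintype ι] (S : Finset (ι → ℤ))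
    (k : (ι → ℤ) → ℝ) (hk : ∀ R ∈ S, 0 < k R) (hneg : ∀ R ∈ S, -R ∈ S)
    (hcycle : ∀ c : (ι → ℤ) → ℝ, (∀ i, ∑ R ∈ S, c R * (R i : ℝ) = 0) →
      ∑ R ∈ S, c R * log (k (-R) / k R) = 0) :
    ∃ x : ι → ℝ, (∀ i, 0 < x i) ∧
      ∀ R ∈ S, k R * ∏ i, x i ^ (-R i).toNat = k (-R) * ∏ i, x i ^ (R i).toNat := by
  obtain ⟨F, hF⟩ := exists_potential_of_forall_cycle S (fun R i => (R i : ℝ)) _ hcycle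
  refine ⟨fun i => exp (-F i), fun i => exp_pos _, fun R hR => ?_⟩
  rw [eq_mul_exp_of_log_div_eq (hk R hR) (hk (-R) (hneg R hR)) (hF R hR),
    prod_pow_toNat_neg_eq_exp_mul fun i _ _ => rfl]
  ring

section Reduction

variable {N : ℕ} {Rset : Finset (Fin N → ℤ)} {U : Finset (Fin N)}

theorem projV_neg (R : Fin N → ℤ) : projV U (-R) = -projV U R := by
  funext k
  by_cases h : k ∈ U <;> simp [projV, h]

theorem sum_mul_eq_sum_projV_mul_add (R : Fin N → ℤ) (E : Fin N → ℝ) :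
    ∑ i, (R i : ℝ) * E i = ∑ i, (projV U R i : ℝ) * E i + ∑ t ∈ U, (R t : ℝ) * E t := by
  have h : ∀ i, (R i : ℝ) * E i =
      (projV U R i : ℝ) * E i + if i ∈ U then (R i : ℝ) * E i else 0 := by
    intro i
    by_cases hi : i ∈ U <;> simp [projV, hi]
  rw [sum_congr rfl fun i _ => h i, sum_add_distrib, sum_ite_mem, univ_inter]

theorem mem_RV_iff {Rb : Fin N → ℤ} :
    Rb ∈ RV Rset U ↔ Rb ≠ 0 ∧ ∃ R ∈ Rset, projV U R = Rb := by
  simp [RV]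

theorem neg_mem_RV (hbid : ∀ R ∈ Rset, -R ∈ Rset) {Rb : Fin N → ℤ} (hRb : Rb ∈ RV Rset U) :
    -Rb ∈ RV Rset U := by
  obtain ⟨hne, R, hR, rfl⟩ := mem_RV_iff.mp hRb
  exact mem_RV_iff.mpr ⟨neg_ne_zero.mpr hne, -R, hbid R hR, projV_neg R⟩

theorem Kred_pos {K : (Fin N → ℤ) → ℝ} {n : Fin N → ℝ} (hK : ∀ R ∈ Rset, 0 < K R)
    (hn : ∀ t ∈ U, 0 < n t) {Rb : Fin N → ℤ} (hRb : Rb ∈ RV Rset U) :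
    0 < Kred Rset U K n Rb := by
  obtain ⟨-, R, hR, hRRb⟩ := mem_RV_iff.mp hRb
  refine sum_pos (fun R' hR' => ?_) ⟨R, mem_filter.mpr ⟨hR, hRRb⟩⟩
  exact mul_pos (hK R' (mem_filter.mp hR').1) (prod_pos fun t ht => pow_pos (hn t ht) _)

theorem Kred_neg_eq_exp_mul {K : (Fin N → ℤ) → ℝ} {E n : Fin N → ℝ}
    (hbid : ∀ R ∈ Rset, -R ∈ Rset) (hK : ∀ R ∈ Rset, 0 < K R)
    (hE : ∀ R ∈ Rset, log (K (-R) / K R) = ∑ i, (R i : ℝ) * E i) {Rb : Fin N → ℤ}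
    (hfrozen : ∀ R ∈ Rset, projV U R = Rb → ∀ t ∈ U, R t ≠ 0 → n t = exp (-E t)) :
    Kred Rset U K n (-Rb) = exp (∑ i, (Rb i : ℝ) * E i) * Kred Rset U K n Rb := by
  rw [Kred, Kred, mul_sum]
  refine (sum_nbij' (- ·) (- ·) ?_ ?_ (fun R _ => neg_neg R) (fun R _ => neg_neg R) ?_).symm
  · intro R hR
    obtain ⟨hR, hRRb⟩ := mem_filter.mp hR
    exact mem_filter.mpr ⟨hbid R hR, by rw [projV_neg, hRRb]⟩
  · intro R hR
    obtain ⟨hR, hRRb⟩ := mem_filter.mp hR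
    exact mem_filter.mpr ⟨hbid R hR, by rw [projV_neg, hRRb, neg_neg]⟩
  · intro R hR
    obtain ⟨hR, hRRb⟩ := mem_filter.mp hR
    rw [prod_pow_toNat_neg_eq_exp_mul (a := R) (hfrozen R hR hRRb),
      eq_mul_exp_of_log_div_eq (hK R hR) (hK _ (hbid R hR)) (hE R hR),
      sum_mul_eq_sum_projV_mul_add (U := U) R E, hRRb, exp_add]
    simp only [Pi.neg_apply, neg_neg]
    ring

end Reduction

theorem stmt12_general (N : ℕ) (Rset : Finset (Fin N → ℤ)) (U : Finset (Fin N))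
    (K : (Fin N → ℤ) → ℝ) (E : Fin N → ℝ) (n : Fin N → ℝ)
    (hbid : ∀ R ∈ Rset, -R ∈ Rset)
    (hK : ∀ R ∈ Rset, 0 < K R)
    (hE : ∀ R ∈ Rset, Real.log (K (-R) / K R) = ∑ i, (R i : ℝ) * E i)
    (hn : ∀ t ∈ U, 0 < n t)
    (heq : ∀ t ∈ U,
        (∃ R ∈ Rset, R t ≠ 0 ∧ ∃ c : (Fin N → ℤ) → ℝ,
            IsRedCycle Rset U c ∧ c (projV U R) ≠ 0) →
        n t = Real.exp (-(E t))) :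
    ∃ Nb : Fin N → ℝ, (∀ i, 0 < Nb i) ∧
      ∀ Rb ∈ RV Rset U,
        Kred Rset U K n Rb * ∏ i, Nb i ^ ((-(Rb i)).toNat)
          = Kred Rset U K n (-Rb) * ∏ i, Nb i ^ ((Rb i).toNat) := by
  refine exists_detailed_balance_of_cycle _ _ (fun _ => Kred_pos hK hn)
    (fun _ => neg_mem_RV hbid) fun c hc => sum_mul_eq_zero_of_cycle _ c _ E hc ?_
  intro Rb hRb hcRb
  have hfrozen : ∀ R ∈ Rset, projV U R = Rb → ∀ t ∈ U, R t ≠ 0 → n t = exp (-E t) :=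
    fun R hR hRRb t ht hRt => heq t ht ⟨R, hR, hRt, c, hc, hRRb ▸ hcRb⟩
  rw [Kred_neg_eq_exp_mul hbid hK hE hfrozen, mul_div_cancel_right₀ _ (Kred_pos hK hn hRb).ne',
    log_exp]

/-- Let `(Ω, R, K)` be bidirectional with detailed balance and energy `E`
(`log(K_{-R}/K_R) = ∑ i, R i E i` on all reactions). Freeze concentrations `n` on `U`,
positive there, and suppose every `s ∈ U` appearing in some reaction whose projection
belongs to a cycle of the reduced network has `n s = e^{-E s}`. Then the reduced kinetic
system `(V, R_V, K[n_U])` satisfies the detailed balance property: there is a positive state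
balancing every reduced reaction with the reduced rates. -/
theorem stmt12 (N : ℕ) (Rset : Finset (Fin N → ℤ)) (U : Finset (Fin N))
    (K : (Fin N → ℤ) → ℝ) (E : Fin N → ℝ) (n : Fin N → ℝ)
    (h0 : ∀ R ∈ Rset, R ≠ 0)
    (hbid : ∀ R ∈ Rset, -R ∈ Rset)
    (hK : ∀ R ∈ Rset, 0 < K R)
    (hE : ∀ R ∈ Rset, Real.log (K (-R) / K R) = ∑ i, (R i : ℝ) * E i)
    (hn : ∀ t ∈ U, 0 < n t)
    (heq : ∀ t ∈ U,
        (∃ R ∈ Rset, R t ≠ 0 ∧ ∃ c : (Fin N → ℤ) → ℝ,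
            IsRedCycle Rset U c ∧ c (projV U R) ≠ 0) →
        n t = Real.exp (-(E t))) :
    ∃ Nb : Fin N → ℝ, (∀ i, 0 < Nb i) ∧
      ∀ Rb ∈ RV Rset U,
        Kred Rset U K n Rb * ∏ i, Nb i ^ ((-(Rb i)).toNat)
          = Kred Rset U K n (-Rb) * ∏ i, Nb i ^ ((Rb i).toNat) :=
  stmt12_general N Rset U K E n hbid hK hE hn heq
end

section
/- Every bidirectional chemical network (Ω, R) admits a completion (Ω_c, R_c) with Ω ⊆ Ω_c and R = {π_Ω R̄ : R̄ ∈ R_c} \ {0} (with each R ∈ R having a unique preimage and no R̄ ∈ R_c projecting to 0) such that (Ω_c, R_c) is conservative, every reaction R̄ ∈ R_c has both a nonempty reactant set and nonempty product set, and (Ω_c, R_c) has no cycles (ker of its reaction matrix is trivial). Consequently, for any rate function K, the completed kinetic system (Ω_c, R_c, K_c) is closed (satisfies detailed balance) for every admissible choice of K_c. -/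
/-!
Enumerate the reactions as `r j`, `j : Fin K`, with `r (σ j) = -r j` for a fixed-point-free
involution `σ`, and add one new substance per reaction: the completed reaction `j` is `r j`
followed by `δ_j - δ_{σ j}`. It consumes substance `σ j` and produces substance `j`, so it has
reactants and products; the `k`-th new coordinate of `∑ c_j R̄_j` is `c_k - c_{σ k} = 2 c_k` for
antisymmetric `c`, so there are no cycles; giving substance `j` the mass `1 + (s_j)⁻`, where `s_j`
is the total stoichiometric change of `r j`, balances the mass. For detailed balance take all old
concentrations `1` and the concentration of substance `j` equal to `Kc(R̄_j)`: both sides become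
`Kc(R̄_j) Kc(R̄_{σ j})`.
-/

open Finset Function

namespace ChemicalCompletion

section reversal

variable {ι G : Type*} [AddCommGroup G] {r : ι → G} {σ : ι → ι}

theorem involutive_of_apply_eq_neg (hr : Injective r) (hrσ : ∀ j, r (σ j) = -r j) :
    Involutive σ :=
  fun j => hr (by rw [hrσ, hrσ, neg_neg])

theorem apply_ne_self_of_apply_eq_neg [IsAddTorsionFree G] (hr0 : ∀ j, r j ≠ 0)
    (hrσ : ∀ j, r (σ j) = -r j) (j : ι) : σ j ≠ j := by
  intro h
  have hj := hrσ j
  rw [h] at hj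
  exact hr0 j (self_eq_neg.mp hj)

end reversal

variable {N K : ℕ}

def auxPart (σ : Fin K → Fin K) (j : Fin K) : Fin K → ℤ :=
  Pi.single j 1 - Pi.single (σ j) 1

def completedReaction (r : Fin K → Fin N → ℤ) (σ : Fin K → Fin K) (j : Fin K) :
    Fin (N + K) → ℤ :=
  Fin.append (r j) (auxPart σ j)

def completedNetwork (r : Fin K → Fin N → ℤ) (σ : Fin K → Fin K) :
    Finset (Fin (N + K) → ℤ) :=
  univ.image (completedReaction r σ)

section auxPart

variable {σ : Fin K → Fin K}

theorem auxPart_apply (j k : Fin K) :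
    auxPart σ j k = (if k = j then 1 else 0) - (if k = σ j then 1 else 0) := by
  simp only [auxPart, Pi.sub_apply, Pi.single_apply]

theorem auxPart_apply_self {j : Fin K} (hj : σ j ≠ j) : auxPart σ j j = 1 := by
  simp [auxPart_apply, hj.symm]

theorem auxPart_apply_apply_self {j : Fin K} (hj : σ j ≠ j) : auxPart σ j (σ j) = -1 := by
  simp [auxPart_apply, hj]

theorem auxPart_apply_involutive (hσ : Involutive σ) (j : Fin K) :
    auxPart σ (σ j) = -auxPart σ j := by
  rw [auxPart, auxPart, hσ j, neg_sub]

theorem toNat_auxPart {j : Fin K} (hj : σ j ≠ j) (k : Fin K) :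
    (auxPart σ j k).toNat = if k = j then 1 else 0 := by
  rw [auxPart_apply]
  split_ifs <;> simp_all

theorem sum_mul_auxPart {R : Type*} [CommRing R] (w : Fin K → R) (j : Fin K) :
    ∑ k, w k * (auxPart σ j k : R) = w j - w (σ j) := by
  simp [auxPart_apply, mul_sub, sum_sub_distrib]

theorem sum_auxPart_mul {R : Type*} [CommRing R] (hσ : Involutive σ) (c : Fin K → R)
    (k : Fin K) : ∑ j, c j * (auxPart σ j k : R) = c k - c (σ k) := by
  have hσk : ∀ j, k = σ j ↔ j = σ k := fun j =>
    ⟨fun h => by rw [h, hσ], fun h => by rw [h, hσ]⟩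
  simp [auxPart_apply, hσk, mul_sub, sum_sub_distrib]

theorem prod_pow_toNat_auxPart {M : Type*} [CommMonoid M] {j : Fin K} (hj : σ j ≠ j)
    (a : Fin K → M) :
    ∏ k, a k ^ (auxPart σ j k).toNat = a j := by
  simp [toNat_auxPart hj, pow_ite]

end auxPart

section completedNetwork

variable {r : Fin K → Fin N → ℤ} {σ : Fin K → Fin K}

theorem completedReaction_castAdd (j : Fin K) :
    (fun i : Fin N => completedReaction r σ j (Fin.castAdd K i)) = r j :=
  funext fun i => Fin.append_left _ _ i

theorem completedReaction_natAdd (j k : Fin K) :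
    completedReaction r σ j (Fin.natAdd N k) = auxPart σ j k :=
  Fin.append_right _ _ _

theorem completedReaction_injective (hr : Injective r) : Injective (completedReaction r σ) :=
  fun j j' h => hr <| by
    simpa only [completedReaction_castAdd] using
      congrArg (fun (Rb : Fin (N + K) → ℤ) (i : Fin N) => Rb (Fin.castAdd K i)) h

theorem completedReaction_apply_involutive (hrσ : ∀ j, r (σ j) = -r j) (hσ : Involutive σ)
    (j : Fin K) : completedReaction r σ (σ j) = -completedReaction r σ j := by
  funext i
  induction i using Fin.addCases with
  | left i => simp [completedReaction, hrσ]
  | right k => simp [completedReaction, auxPart_apply_involutive hσ]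

theorem mem_completedNetwork {Rb : Fin (N + K) → ℤ} :
    Rb ∈ completedNetwork r σ ↔ ∃ j, completedReaction r σ j = Rb := by
  simp [completedNetwork]

theorem castAdd_mem_range_of_mem_completedNetwork {Rb : Fin (N + K) → ℤ}
    (hRb : Rb ∈ completedNetwork r σ) : (fun i : Fin N => Rb (Fin.castAdd K i)) ∈ Set.range r := by
  obtain ⟨j, rfl⟩ := mem_completedNetwork.mp hRb
  exact ⟨j, (completedReaction_castAdd j).symm⟩

theorem existsUnique_mem_completedNetwork_castAdd_eq (hr : Injective r) (j : Fin K) :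
    ∃! Rb, Rb ∈ completedNetwork r σ ∧ (fun i : Fin N => Rb (Fin.castAdd K i)) = r j := by
  refine ⟨completedReaction r σ j, ⟨mem_completedNetwork.mpr ⟨j, rfl⟩, completedReaction_castAdd j⟩,
    ?_⟩
  rintro Rb ⟨hRb, hproj⟩
  obtain ⟨j', rfl⟩ := mem_completedNetwork.mp hRb
  rw [completedReaction_castAdd] at hproj
  rw [hr hproj]

theorem neg_mem_completedNetwork (hrσ : ∀ j, r (σ j) = -r j) (hσ : Involutive σ)
    {Rb : Fin (N + K) → ℤ} (hRb : Rb ∈ completedNetwork r σ) : -Rb ∈ completedNetwork r σ := by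
  obtain ⟨j, rfl⟩ := mem_completedNetwork.mp hRb
  exact mem_completedNetwork.mpr ⟨σ j, completedReaction_apply_involutive hrσ hσ j⟩

theorem exists_neg_and_exists_pos_of_mem_completedNetwork (hσ : ∀ j, σ j ≠ j)
    {Rb : Fin (N + K) → ℤ} (hRb : Rb ∈ completedNetwork r σ) :
    (∃ i, Rb i < 0) ∧ (∃ i, 0 < Rb i) := by
  obtain ⟨j, rfl⟩ := mem_completedNetwork.mp hRb
  refine ⟨⟨Fin.natAdd N (σ j), ?_⟩, ⟨Fin.natAdd N j, ?_⟩⟩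
  · simp [completedReaction_natAdd, auxPart_apply_apply_self (hσ j)]
  · simp [completedReaction_natAdd, auxPart_apply_self (hσ j)]

theorem exists_pos_mass_completedNetwork (hrσ : ∀ j, r (σ j) = -r j) :
    ∃ m : Fin (N + K) → ℝ, (∀ i, 0 < m i) ∧
      ∀ Rb ∈ completedNetwork r σ, ∑ i, m i * (Rb i : ℝ) = 0 := by
  set s : Fin K → ℝ := fun j => ∑ i, (r j i : ℝ)
  have hs : ∀ j, s (σ j) = -s j := fun j => by simp [s, hrσ, sum_neg_distrib]
  refine ⟨Fin.append 1 (fun j => 1 + (s j)⁻), ?_, ?_⟩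
  · intro i
    induction i using Fin.addCases with
    | left i => simp
    | right j => simp only [Fin.append_right]; positivity
  · intro Rb hRb
    obtain ⟨j, rfl⟩ := mem_completedNetwork.mp hRb
    simp only [Fin.sum_univ_add, Fin.append_left, Fin.append_right, completedReaction_natAdd]
    rw [sum_mul_auxPart (fun j => 1 + (s j)⁻), hs, negPart_neg]
    simp only [Pi.one_apply, one_mul, completedReaction, Fin.append_left, s,
      add_sub_add_left_eq_sub, negPart_sub_posPart, add_neg_cancel]

theorem eq_zero_of_mem_completedNetwork_of_sum_eq_zero (hr : Injective r)
    (hrσ : ∀ j, r (σ j) = -r j) (c : (Fin (N + K) → ℤ) → ℝ)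
    (hc : ∀ Rb ∈ completedNetwork r σ, c (-Rb) = -c Rb)
    (hker : ∀ k, ∑ Rb ∈ completedNetwork r σ, c Rb * (Rb k : ℝ) = 0) :
    ∀ Rb ∈ completedNetwork r σ, c Rb = 0 := by
  have hσ := involutive_of_apply_eq_neg hr hrσ
  intro Rb hRb
  obtain ⟨k, rfl⟩ := mem_completedNetwork.mp hRb
  have hk := hker (Fin.natAdd N k)
  simp only [completedNetwork, sum_image fun j _ j' _ h => completedReaction_injective hr h,
    completedReaction_natAdd] at hk
  rw [sum_auxPart_mul hσ (fun j => c (completedReaction r σ j)),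
    completedReaction_apply_involutive hrσ hσ, hc _ hRb] at hk
  linarith

theorem exists_detailedBalance_completedNetwork (hrσ : ∀ j, r (σ j) = -r j)
    (hσ : Involutive σ) (hσ₀ : ∀ j, σ j ≠ j) (Kc : (Fin (N + K) → ℤ) → ℝ)
    (hKc : ∀ Rb ∈ completedNetwork r σ, 0 < Kc Rb) :
    ∃ Nb : Fin (N + K) → ℝ, (∀ i, 0 < Nb i) ∧
      ∀ Rb ∈ completedNetwork r σ, Kc Rb * ∏ i, Nb i ^ ((-(Rb i)).toNat)
        = Kc (-Rb) * ∏ i, Nb i ^ ((Rb i).toNat) := by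
  set a : Fin K → ℝ := fun j => Kc (completedReaction r σ j)
  have hprod : ∀ j, ∏ i, Fin.append 1 a i ^ (completedReaction r σ j i).toNat = a j := by
    intro j
    simp [Fin.prod_univ_add, completedReaction_natAdd, prod_pow_toNat_auxPart (hσ₀ j)]
  refine ⟨Fin.append 1 a, ?_, ?_⟩
  · intro i
    induction i using Fin.addCases with
    | left i => simp
    | right j => simpa using hKc _ (mem_completedNetwork.mpr ⟨j, rfl⟩)
  · intro Rb hRb
    obtain ⟨j, rfl⟩ := mem_completedNetwork.mp hRb
    have hneg := completedReaction_apply_involutive hrσ hσ j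
    have hneg_apply : ∀ i, -completedReaction r σ j i = completedReaction r σ (σ j) i := by
      simp [hneg]
    rw [← hneg]
    simp only [hneg_apply, hprod, a, mul_comm]

end completedNetwork

end ChemicalCompletion

open ChemicalCompletion

/-- Every bidirectional chemical network `(Ω, R)` admits a completion
`(Ω_c, R_c)` (adding `M` new substances) whose reactions project onto `R` (no reaction
projecting to zero, each `R ∈ R` with a unique preimage) which is bidirectional,
conservative, has no sources or sinks, and has no cycles (the antisymmetric kernel of its
reaction set is trivial). Consequently, for every rate function `Kc` the completed kinetic
system is closed: it satisfies the detailed balance property. -/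
theorem stmt15 (N : ℕ) (Rset : Finset (Fin N → ℤ))
    (h0 : ∀ R ∈ Rset, R ≠ 0)
    (hbid : ∀ R ∈ Rset, -R ∈ Rset) :
    ∃ (M : ℕ) (Rc : Finset (Fin (N + M) → ℤ)),
      -- bidirectional
      (∀ Rb ∈ Rc, -Rb ∈ Rc) ∧
      -- the projections of the completed reactions are exactly R, unique preimages
      (∀ Rb ∈ Rc, (fun i : Fin N => Rb (Fin.castAdd M i)) ∈ Rset) ∧
      (∀ R ∈ Rset, ∃! Rb, Rb ∈ Rc ∧ (fun i : Fin N => Rb (Fin.castAdd M i)) = R) ∧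
      -- no reaction projects to zero
      (∀ Rb ∈ Rc, (fun i : Fin N => Rb (Fin.castAdd M i)) ≠ 0) ∧
      -- conservative
      (∃ m : Fin (N + M) → ℝ, (∀ i, 0 < m i) ∧ ∀ Rb ∈ Rc, ∑ i, m i * (Rb i : ℝ) = 0) ∧
      -- no sources or sinks
      (∀ Rb ∈ Rc, (∃ i, Rb i < 0) ∧ (∃ i, 0 < Rb i)) ∧
      -- no cycles
      (∀ c : (Fin (N + M) → ℤ) → ℝ, (∀ Rb ∈ Rc, c (-Rb) = -(c Rb)) →
        (∀ k, ∑ Rb ∈ Rc, c Rb * (Rb k : ℝ) = 0) → ∀ Rb ∈ Rc, c Rb = 0) ∧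
      -- detailed balance for every rate function
      (∀ Kc : (Fin (N + M) → ℤ) → ℝ, (∀ Rb ∈ Rc, 0 < Kc Rb) →
        ∃ Nb : Fin (N + M) → ℝ, (∀ i, 0 < Nb i) ∧
          ∀ Rb ∈ Rc, Kc Rb * ∏ i, Nb i ^ ((-(Rb i)).toNat)
            = Kc (-Rb) * ∏ i, Nb i ^ ((Rb i).toNat)) := by
  set e := Rset.equivFin.symm
  set r : Fin Rset.card → Fin N → ℤ := fun j => e j
  set σ : Fin Rset.card → Fin Rset.card := fun j => e.symm ⟨-r j, hbid _ (e j).2⟩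
  have hr : Injective r := Subtype.val_injective.comp e.injective
  have hrσ : ∀ j, r (σ j) = -r j := fun j => by simp [r, σ]
  have hσ := involutive_of_apply_eq_neg hr hrσ
  have hσ₀ := apply_ne_self_of_apply_eq_neg (fun j => h0 _ (e j).2) hrσ
  refine ⟨Rset.card, completedNetwork r σ, fun _ => neg_mem_completedNetwork hrσ hσ, ?_, ?_, ?_,
    exists_pos_mass_completedNetwork hrσ,
    fun _ => exists_neg_and_exists_pos_of_mem_completedNetwork hσ₀,
    eq_zero_of_mem_completedNetwork_of_sum_eq_zero hr hrσ,
    exists_detailedBalance_completedNetwork hrσ hσ hσ₀⟩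
  · intro Rb hRb
    obtain ⟨j, hj⟩ := castAdd_mem_range_of_mem_completedNetwork hRb
    exact hj ▸ (e j).2
  · intro R hR
    simpa [r] using existsUnique_mem_completedNetwork_castAdd_eq (σ := σ) hr (e.symm ⟨R, hR⟩)
  · intro Rb hRb
    obtain ⟨j, hj⟩ := castAdd_mem_range_of_mem_completedNetwork hRb
    exact hj ▸ h0 _ (e j).2
end

section
/- Let (Ω, R, K) be a bidirectional kinetic system such that there exists a cycle c ∈ ker(𝐑) with ∑_j c(j) log(K_{−R_j}/K_{R_j}) ≠ 0, and suppose every reaction appearing in c (every R_j with c(j) ≠ 0) is constrained (must be completed with zeros on all new coordinates). Then (Ω, R, K) admits no closed (detailed-balance) admissible completion: for every admissible completion (Ω_c, R_c) and every choice of frozen concentrations on Ω_c \ Ω, the completed kinetic system fails the detailed balance property. -/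
/-!
A constrained reaction `R` has exactly one lift to the completion, its extension by zeros, and
so does `-R`; no frozen species enters either lift, so `K R` and `K (-R)` are rates of the
completion itself. Detailed balance at a positive state `Nb` then gives
`log (K (-R) / K R) = -∑ k, R k * log (Nb k)`, a function of `R` that is linear in the
stoichiometry. Weighted by a cycle `c` of the reaction matrix these terms sum to zero, so the
circuit condition would hold on `c`.
-/

open Finset

lemma log_div_eq_neg_sum_of_balance {ι : Type*} [Fintype ι] {a b : ℝ} (ha : 0 < a) (hb : 0 < b)
    {x : ι → ℝ} (hx : ∀ i, 0 < x i) (ν : ι → ℤ)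
    (h : a * ∏ i, x i ^ (-ν i).toNat = b * ∏ i, x i ^ (ν i).toNat) :
    Real.log (b / a) = -∑ i, (ν i : ℝ) * Real.log (x i) := by
  have hpow : ∀ m : ι → ℕ, ∀ i ∈ univ, x i ^ m i ≠ 0 := fun m i _ => (pow_pos (hx i) _).ne'
  have hlog := congrArg Real.log h
  rw [Real.log_mul ha.ne' (prod_ne_zero_iff.2 (hpow _)),
    Real.log_mul hb.ne' (prod_ne_zero_iff.2 (hpow _)), Real.log_prod (hpow _),
    Real.log_prod (hpow _)] at hlog
  simp only [Real.log_pow] at hlog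
  have hsplit : ∀ i, (ν i : ℝ) = (ν i).toNat - (-ν i).toNat := fun i => by
    exact_mod_cast (by omega : ν i = (ν i).toNat - (-ν i).toNat)
  simp only [Real.log_div hb.ne' ha.ne', hsplit, sub_mul, sum_sub_distrib]
  linarith

lemma sum_mul_sum_eq_zero_of_sum_mul_eq_zero {ι κ : Type*} [Fintype ι] [Fintype κ]
    {c : ι → ℝ} {A : ι → κ → ℝ} (hc : ∀ k, ∑ j, c j * A j k = 0) (y : κ → ℝ) :
    ∑ j, c j * ∑ k, A j k * y k = 0 := by
  simp_rw [mul_sum, ← mul_assoc]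
  rw [sum_comm]
  simp [← sum_mul, hc]

section Completion

variable {N M : ℕ}

lemma eq_of_castAdd_eq_of_natAdd_eq_zero {α : Type*} [Zero α] {A B : Fin (N + M) → α}
    (hleft : (fun i => A (Fin.castAdd M i)) = fun i => B (Fin.castAdd M i))
    (hA : ∀ i, A (Fin.natAdd N i) = 0) (hB : ∀ i, B (Fin.natAdd N i) = 0) : A = B := by
  rw [← Fin.append_castAdd_natAdd (f := A), ← Fin.append_castAdd_natAdd (f := B), hleft]
  simp only [hA, hB]

variable {Rset : Finset (Fin N → ℤ)} {K : (Fin N → ℤ) → ℝ}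
  {Rc : Finset (Fin (N + M) → ℤ)} {Kc : (Fin (N + M) → ℤ) → ℝ} {n : Fin (N + M) → ℝ}

lemma rate_eq_of_constrained
    (hrate : ∀ R ∈ Rset,
      K R = ∑ Rb ∈ Rc.filter (fun Rb => (fun i : Fin N => Rb (Fin.castAdd M i)) = R),
        Kc Rb * ∏ i : Fin M, n (Fin.natAdd N i) ^ ((-(Rb (Fin.natAdd N i))).toNat))
    {R : Fin N → ℤ} (hR : R ∈ Rset) {Rb : Fin (N + M) → ℤ} (hRb : Rb ∈ Rc)
    (hproj : (fun i => Rb (Fin.castAdd M i)) = R)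
    (hconstr : ∀ x ∈ Rc, (fun i => x (Fin.castAdd M i)) = R → ∀ i, x (Fin.natAdd N i) = 0) :
    K R = Kc Rb := by
  have hRb0 := hconstr Rb hRb hproj
  have hunique : Rc.filter (fun x => (fun i : Fin N => x (Fin.castAdd M i)) = R) = {Rb} := by
    refine eq_singleton_iff_unique_mem.2 ⟨mem_filter.2 ⟨hRb, hproj⟩, fun x hx => ?_⟩
    obtain ⟨hx, hxproj⟩ := mem_filter.1 hx
    exact eq_of_castAdd_eq_of_natAdd_eq_zero (hxproj.trans hproj.symm)
      (hconstr x hx hxproj) hRb0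
  rw [hrate R hR, hunique, sum_singleton]
  simp [hRb0]

lemma log_rate_ratio_eq_of_constrained (hbid : ∀ R ∈ Rset, -R ∈ Rset)
    (hbidc : ∀ Rb ∈ Rc, -Rb ∈ Rc) (hKc : ∀ Rb ∈ Rc, 0 < Kc Rb)
    (hrate : ∀ R ∈ Rset,
      K R = ∑ Rb ∈ Rc.filter (fun Rb => (fun i : Fin N => Rb (Fin.castAdd M i)) = R),
        Kc Rb * ∏ i : Fin M, n (Fin.natAdd N i) ^ ((-(Rb (Fin.natAdd N i))).toNat))
    {Nb : Fin (N + M) → ℝ} (hNb : ∀ i, 0 < Nb i)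
    (hdb : ∀ Rb ∈ Rc,
      Kc Rb * ∏ i, Nb i ^ ((-(Rb i)).toNat) = Kc (-Rb) * ∏ i, Nb i ^ ((Rb i).toNat))
    {R : Fin N → ℤ} (hR : R ∈ Rset) {Rb : Fin (N + M) → ℤ} (hRb : Rb ∈ Rc)
    (hproj : (fun i => Rb (Fin.castAdd M i)) = R)
    (hconstr : ∀ x ∈ Rc,
      ((fun i => x (Fin.castAdd M i)) = R ∨ (fun i => x (Fin.castAdd M i)) = -R) →
        ∀ i, x (Fin.natAdd N i) = 0) :
    Real.log (K (-R) / K R) = -∑ k, (R k : ℝ) * Real.log (Nb (Fin.castAdd M k)) := by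
  have hK : K R = Kc Rb :=
    rate_eq_of_constrained hrate hR hRb hproj fun x hx h => hconstr x hx (Or.inl h)
  have hKneg : K (-R) = Kc (-Rb) :=
    rate_eq_of_constrained hrate (hbid R hR) (hbidc Rb hRb) (by rw [← hproj]; rfl)
      fun x hx h => hconstr x hx (Or.inr h)
  rw [hK, hKneg, log_div_eq_neg_sum_of_balance (hKc Rb hRb) (hKc _ (hbidc Rb hRb)) hNb Rb
    (hdb Rb hRb), Fin.sum_univ_add]
  simp [hconstr Rb hRb (Or.inl hproj), ← hproj]

end Completion

theorem stmt16_general (N s : ℕ) (Rset : Finset (Fin N → ℤ)) (K : (Fin N → ℤ) → ℝ)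
    (ρ : Fin s → Fin N → ℤ)
    (hbid : ∀ R ∈ Rset, -R ∈ Rset)
    (hρmem : ∀ j, ρ j ∈ Rset)
    (c : Fin s → ℝ)
    (hcycle : ∀ k : Fin N, ∑ j, c j * (ρ j k : ℝ) = 0)
    (hfail : ∑ j, c j * Real.log (K (-(ρ j)) / K (ρ j)) ≠ 0)
    -- data of an arbitrary admissible completion with frozen concentrations n
    (M : ℕ) (Rc : Finset (Fin (N + M) → ℤ)) (Kc : (Fin (N + M) → ℤ) → ℝ)
    (n : Fin (N + M) → ℝ)
    (hbidc : ∀ Rb ∈ Rc, -Rb ∈ Rc)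
    (hsurj : ∀ R ∈ Rset, ∃ Rb ∈ Rc, (fun i : Fin N => Rb (Fin.castAdd M i)) = R)
    (hKc : ∀ Rb ∈ Rc, 0 < Kc Rb)
    -- admissibility: the reactions of the cycle are constrained (zero on new coordinates)
    (hadm : ∀ Rb ∈ Rc, ∀ j, c j ≠ 0 →
        ((fun i : Fin N => Rb (Fin.castAdd M i)) = ρ j ∨
         (fun i : Fin N => Rb (Fin.castAdd M i)) = -(ρ j)) →
        ∀ i : Fin M, Rb (Fin.natAdd N i) = 0)
    -- K is the reduction of Kc with the frozen concentrations n
    (hrate : ∀ R ∈ Rset,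
        K R = ∑ Rb ∈ Rc.filter (fun Rb => (fun i : Fin N => Rb (Fin.castAdd M i)) = R),
          Kc Rb * ∏ i : Fin M, n (Fin.natAdd N i) ^ ((-(Rb (Fin.natAdd N i))).toNat)) :
    ¬ ∃ Nb : Fin (N + M) → ℝ, (∀ i, 0 < Nb i) ∧
        ∀ Rb ∈ Rc, Kc Rb * ∏ i, Nb i ^ ((-(Rb i)).toNat)
          = Kc (-Rb) * ∏ i, Nb i ^ ((Rb i).toNat) := by
  rintro ⟨Nb, hNb, hdb⟩
  have hlift : ∀ j, c j ≠ 0 → Real.log (K (-(ρ j)) / K (ρ j)) =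
      -∑ k, (ρ j k : ℝ) * Real.log (Nb (Fin.castAdd M k)) := fun j hcj => by
    obtain ⟨Rb, hRb, hproj⟩ := hsurj (ρ j) (hρmem j)
    exact log_rate_ratio_eq_of_constrained hbid hbidc hKc hrate hNb hdb (hρmem j) hRb hproj
      fun x hx h => hadm x hx j hcj h
  apply hfail
  calc ∑ j, c j * Real.log (K (-(ρ j)) / K (ρ j))
      = -∑ j, c j * ∑ k, (ρ j k : ℝ) * Real.log (Nb (Fin.castAdd M k)) := by
        rw [← sum_neg_distrib]
        refine sum_congr rfl fun j _ => ?_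
        rcases eq_or_ne (c j) 0 with hcj | hcj
        · simp [hcj]
        · rw [hlift j hcj, mul_neg]
    _ = 0 := by rw [sum_mul_sum_eq_zero_of_sum_mul_eq_zero hcycle, neg_zero]

/-- Let `(Ω, R, K)` be a bidirectional kinetic system possessing a cycle
`c` (over the representatives `ρ`) on which the circuit condition fails:
`∑ j, c j · log(K_{-ρ j}/K_{ρ j}) ≠ 0`, and suppose every reaction appearing in `c` is
constrained. Then no admissible completion is closed: for every admissible completion
`(Ω_c, R_c, K_c)` with frozen concentrations `n` whose reduction reproduces `K`, the
completed kinetic system fails the detailed balance property. -/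
theorem stmt16 (N s : ℕ) (Rset : Finset (Fin N → ℤ)) (K : (Fin N → ℤ) → ℝ)
    (ρ : Fin s → Fin N → ℤ)
    (h0 : ∀ R ∈ Rset, R ≠ 0)
    (hbid : ∀ R ∈ Rset, -R ∈ Rset)
    (hK : ∀ R ∈ Rset, 0 < K R)
    (hρmem : ∀ j, ρ j ∈ Rset)
    (c : Fin s → ℝ)
    (hcycle : ∀ k : Fin N, ∑ j, c j * (ρ j k : ℝ) = 0)
    (hfail : ∑ j, c j * Real.log (K (-(ρ j)) / K (ρ j)) ≠ 0)
    -- data of an arbitrary admissible completion with frozen concentrations n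
    (M : ℕ) (Rc : Finset (Fin (N + M) → ℤ)) (Kc : (Fin (N + M) → ℤ) → ℝ)
    (n : Fin (N + M) → ℝ)
    (hbidc : ∀ Rb ∈ Rc, -Rb ∈ Rc)
    (hproj : ∀ Rb ∈ Rc, (fun i : Fin N => Rb (Fin.castAdd M i)) ∈ Rset)
    (hsurj : ∀ R ∈ Rset, ∃ Rb ∈ Rc, (fun i : Fin N => Rb (Fin.castAdd M i)) = R)
    (hKc : ∀ Rb ∈ Rc, 0 < Kc Rb)
    (hnpos : ∀ i, 0 < n i)
    -- admissibility: the reactions of the cycle are constrained (zero on new coordinates)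
    (hadm : ∀ Rb ∈ Rc, ∀ j, c j ≠ 0 →
        ((fun i : Fin N => Rb (Fin.castAdd M i)) = ρ j ∨
         (fun i : Fin N => Rb (Fin.castAdd M i)) = -(ρ j)) →
        ∀ i : Fin M, Rb (Fin.natAdd N i) = 0)
    -- K is the reduction of Kc with the frozen concentrations n
    (hrate : ∀ R ∈ Rset,
        K R = ∑ Rb ∈ Rc.filter (fun Rb => (fun i : Fin N => Rb (Fin.castAdd M i)) = R),
          Kc Rb * ∏ i : Fin M, n (Fin.natAdd N i) ^ ((-(Rb (Fin.natAdd N i))).toNat)) :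
    ¬ ∃ Nb : Fin (N + M) → ℝ, (∀ i, 0 < Nb i) ∧
        ∀ Rb ∈ Rc, Kc Rb * ∏ i, Nb i ^ ((-(Rb i)).toNat)
          = Kc (-Rb) * ∏ i, Nb i ^ ((Rb i).toNat) :=
  stmt16_general N s Rset K ρ hbid hρmem c hcycle hfail M Rc Kc n hbidc hsurj hKc hadm hrate
end

section
/- Let (Ω, R, K) be a bidirectional kinetic system, U ⊆ Ω nonempty, V = Ω \ U, and n_U ∈ ℝ_{>0}^{|U|}. Then t ↦ n(t) ∈ ℝ_{≥0}^{|V|} solves the mass-action ODE of the reduced kinetic system (V, R_V, K[n_U]) with initial condition n_0 if and only if t ↦ n̄(t) := (n(t), n_U) ∈ ℝ_{≥0}^N solves the kinetic system with fluxes, i.e. dn̄/dt = ∑_{R ∈ R_s} R J_R(n̄) + J^E(t) with J^E(t) := −∑_{i∈U} e_i ∑_{R∈R_s} R(i) J_R(n̄), and initial condition (n_0, n_U). -/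
/-
On the frozen substances `n̄` is constant and the extra flux `J^E` cancels the field exactly, so
both systems only constrain the coordinates in `V`. There the two right-hand sides agree: grouping
the reactions by their projection onto `V`, the frozen factors `∏_{s ∈ U} n_s^{-R(s)}` become the
reduced rates `K[n_U]`, reactions projecting to `0` contribute nothing to a `V`-coordinate, and the
reactions `ρ j`, `-ρ j` of each bidirectional pair combine into `ρ j · J_{ρ j}`.
-/

open Finset

/-- The net flux of a reaction `R` at the state `m`. -/
noncomputable def flux {N : ℕ} (K : (Fin N → ℤ) → ℝ) (R : Fin N → ℤ)
    (m : Fin N → ℝ) : ℝ :=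
  K R * ∏ k, m k ^ ((-(R k)).toNat) - K (-R) * ∏ k, m k ^ ((R k).toNat)

noncomputable def massAction {N : ℕ} (K : (Fin N → ℤ) → ℝ) (R : Fin N → ℤ) (m : Fin N → ℝ) : ℝ :=
  K R * ∏ k, m k ^ (-(R k)).toNat

lemma flux_eq_massAction_sub {N : ℕ} (K : (Fin N → ℤ) → ℝ) (R : Fin N → ℤ) (m : Fin N → ℝ) :
    flux K R m = massAction K R m - massAction K (-R) m := by
  simp [flux, massAction]

lemma sum_eq_sum_add_neg {α ι M : Type*} [InvolutiveNeg α] [DecidableEq α] [Fintype ι]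
    [AddCommMonoid M] (S : Finset α) (ρ : ι → α) (g : α → M)
    (hρmem : ∀ j, ρ j ∈ S) (hneg : ∀ a ∈ S, -a ∈ S) (hρcover : ∀ a ∈ S, ∃ j, a = ρ j ∨ a = -ρ j)
    (hρinj : Function.Injective ρ) (hρpair : ∀ j k, ρ j ≠ -ρ k) :
    ∑ a ∈ S, g a = ∑ j, (g (ρ j) + g (-ρ j)) := by
  have hS : S = univ.image ρ ∪ univ.image (fun j => -ρ j) := by
    ext a
    simp only [mem_union, mem_image, mem_univ, true_and]
    refine ⟨fun ha => ?_, ?_⟩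
    · obtain ⟨j, rfl | rfl⟩ := hρcover a ha
      exacts [Or.inl ⟨j, rfl⟩, Or.inr ⟨j, rfl⟩]
    · rintro (⟨j, rfl⟩ | ⟨j, rfl⟩)
      exacts [hρmem j, hneg _ (hρmem j)]
  have hdisj : Disjoint (univ.image ρ) (univ.image fun j => -ρ j) := by
    simp only [disjoint_left, mem_image, mem_univ, true_and]
    rintro _ ⟨j, rfl⟩ ⟨k, hk⟩
    exact hρpair j k hk.symm
  rw [hS, sum_union hdisj, sum_image fun _ _ _ _ h => hρinj h,
    sum_image fun _ _ _ _ h => hρinj (neg_injective h), ← sum_add_distrib]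

section Reduction

variable {N : ℕ} (Rset : Finset (Fin N → ℤ)) {U : Finset (Fin N)} (K : (Fin N → ℤ) → ℝ)
  {nU m : Fin N → ℝ}

lemma prod_mul_prod_projV (hm : ∀ k ∈ U, m k = nU k) (R : Fin N → ℤ) :
    (∏ t ∈ U, nU t ^ (-(R t)).toNat) * ∏ k, m k ^ (-(projV U R k)).toNat
      = ∏ k, m k ^ (-(R k)).toNat := by
  have hV : ∏ k, m k ^ (-(projV U R k)).toNat = ∏ k ∈ Uᶜ, m k ^ (-(R k)).toNat := by
    rw [← prod_mul_prod_compl U, prod_eq_one fun k hk => by simp [projV, hk], one_mul]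
    exact prod_congr rfl fun k hk => by simp [projV, mem_compl.mp hk]
  rw [hV, prod_congr rfl fun k hk => by rw [← hm k hk], prod_mul_prod_compl]

lemma sum_RV_eq_sum_massAction (hm : ∀ k ∈ U, m k = nU k) {i : Fin N} (hi : i ∉ U) :
    ∑ Rb ∈ RV Rset U, (Rb i : ℝ) * Kred Rset U K nU Rb * ∏ k, m k ^ (-(Rb k)).toNat
      = ∑ R ∈ Rset, (R i : ℝ) * massAction K R m := by
  have hproj : ∀ R, projV U R i = R i := fun R => if_neg hi
  have hfiber : ∀ Rb, (Rb i : ℝ) * Kred Rset U K nU Rb * ∏ k, m k ^ (-(Rb k)).toNat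
      = ∑ R ∈ Rset with projV U R = Rb, (R i : ℝ) * massAction K R m := by
    intro Rb
    rw [Kred, mul_sum, sum_mul]
    refine sum_congr rfl fun R hR => ?_
    obtain rfl := (mem_filter.mp hR).2
    rw [massAction, ← prod_mul_prod_projV hm R, hproj]
    ring
  have hzero : ∑ R ∈ Rset with projV U R = 0, (R i : ℝ) * massAction K R m = 0 := by
    rw [← hfiber 0]
    simp
  simp only [hfiber]
  rw [RV, sum_erase (Rset.image (projV U)) hzero,
    sum_fiberwise_of_maps_to fun R hR => mem_image_of_mem _ hR]

lemma sum_RV_eq_sum_flux {s : ℕ} {ρ : Fin s → Fin N → ℤ} (hbid : ∀ R ∈ Rset, -R ∈ Rset)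
    (hρmem : ∀ j, ρ j ∈ Rset) (hρcover : ∀ R ∈ Rset, ∃ j, R = ρ j ∨ R = -(ρ j))
    (hρinj : Function.Injective ρ) (hρpair : ∀ j k, ρ j ≠ -(ρ k))
    (hm : ∀ k ∈ U, m k = nU k) {i : Fin N} (hi : i ∉ U) :
    ∑ Rb ∈ RV Rset U, (Rb i : ℝ) * Kred Rset U K nU Rb * ∏ k, m k ^ (-(Rb k)).toNat
      = ∑ j, (ρ j i : ℝ) * flux K (ρ j) m := by
  rw [sum_RV_eq_sum_massAction Rset K hm hi,
    sum_eq_sum_add_neg Rset ρ _ hρmem hbid hρcover hρinj hρpair]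
  refine sum_congr rfl fun j _ => ?_
  rw [flux_eq_massAction_sub, Pi.neg_apply, Int.cast_neg]
  ring

end Reduction

theorem stmt17_general (N s : ℕ) (Rset : Finset (Fin N → ℤ)) (U : Finset (Fin N))
    (K : (Fin N → ℤ) → ℝ) (ρ : Fin s → Fin N → ℤ)
    (nU : Fin N → ℝ) (x : ℝ → Fin N → ℝ) (n₀ : Fin N → ℝ)
    (hbid : ∀ R ∈ Rset, -R ∈ Rset)
    (hρmem : ∀ j, ρ j ∈ Rset)
    (hρcover : ∀ R ∈ Rset, ∃ j, R = ρ j ∨ R = -(ρ j))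
    (hρinj : Function.Injective ρ)
    (hρpair : ∀ j k, ρ j ≠ -(ρ k)) :
    letI nbar : ℝ → Fin N → ℝ := fun t i => if i ∈ U then nU i else x t i
    letI field : (Fin N → ℝ) → Fin N → ℝ := fun m i => ∑ j, (ρ j i : ℝ) * flux K (ρ j) m
    letI redField : (Fin N → ℝ) → Fin N → ℝ := fun m i =>
      ∑ Rb ∈ RV Rset U, (Rb i : ℝ) * Kred Rset U K nU Rb * ∏ k, m k ^ ((-(Rb k)).toNat)
    (((∀ i, i ∉ U → x 0 i = n₀ i) ∧
        ∀ t : ℝ, ∀ i, i ∉ U →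
          HasDerivAt (fun τ => nbar τ i) (redField (nbar t) i) t) ↔
     ((∀ i, nbar 0 i = if i ∈ U then nU i else n₀ i) ∧
        ∀ t : ℝ, ∀ i : Fin N,
          HasDerivAt (fun τ => nbar τ i)
            (field (nbar t) i + (if i ∈ U then -(field (nbar t) i) else 0)) t)) := by
  beta_reduce
  refine and_congr (forall_congr' fun i => ?_) (forall_congr' fun t => forall_congr' fun i => ?_)
  · by_cases hi : i ∈ U <;> simp [hi]
  · by_cases hi : i ∈ U
    · simpa [hi] using hasDerivAt_const t (nU i)
    · have hm : ∀ k ∈ U, (if k ∈ U then nU k else x t k) = nU k := fun k hk => if_pos hk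
      simp only [hi, not_false_eq_true, forall_const, if_false, add_zero]
      rw [sum_RV_eq_sum_flux Rset K hbid hρmem hρcover hρinj hρpair hm hi]

/-- Let `(Ω,R,K)` be a bidirectional kinetic system with representatives
`ρ`, let `U` be the frozen substances with frozen concentrations `nU`, and let
`n̄ t = (x t on V, nU on U)`. Then `n̄` solves (on `V`) the mass-action ODE of the reduced
kinetic system `(V, R_V, K[n_U])` with initial condition `n₀` if and only if `n̄` solves the
kinetic system with fluxes `dn̄/dt = ∑_{R∈R_s} R J_R(n̄) + J^E(t)`, where
`J^E(t) = -∑_{i∈U} e_i ∑_{R∈R_s} R(i) J_R(n̄)`, with initial condition `(n₀, nU)`. -/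
theorem stmt17 (N s : ℕ) (Rset : Finset (Fin N → ℤ)) (U : Finset (Fin N))
    (K : (Fin N → ℤ) → ℝ) (ρ : Fin s → Fin N → ℤ)
    (nU : Fin N → ℝ) (x : ℝ → Fin N → ℝ) (n₀ : Fin N → ℝ)
    (h0 : ∀ R ∈ Rset, R ≠ 0)
    (hbid : ∀ R ∈ Rset, -R ∈ Rset)
    (hK : ∀ R ∈ Rset, 0 < K R)
    (hρmem : ∀ j, ρ j ∈ Rset)
    (hρcover : ∀ R ∈ Rset, ∃ j, R = ρ j ∨ R = -(ρ j))
    (hρinj : Function.Injective ρ)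
    (hρpair : ∀ j k, ρ j ≠ -(ρ k))
    (hU : U.Nonempty)
    (hnU : ∀ t ∈ U, 0 < nU t) :
    letI nbar : ℝ → Fin N → ℝ := fun t i => if i ∈ U then nU i else x t i
    letI field : (Fin N → ℝ) → Fin N → ℝ := fun m i => ∑ j, (ρ j i : ℝ) * flux K (ρ j) m
    letI redField : (Fin N → ℝ) → Fin N → ℝ := fun m i =>
      ∑ Rb ∈ RV Rset U, (Rb i : ℝ) * Kred Rset U K nU Rb * ∏ k, m k ^ ((-(Rb k)).toNat)
    (((∀ i, i ∉ U → x 0 i = n₀ i) ∧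
        ∀ t : ℝ, ∀ i, i ∉ U →
          HasDerivAt (fun τ => nbar τ i) (redField (nbar t) i) t) ↔
     ((∀ i, nbar 0 i = if i ∈ U then nU i else n₀ i) ∧
        ∀ t : ℝ, ∀ i : Fin N,
          HasDerivAt (fun τ => nbar τ i)
            (field (nbar t) i + (if i ∈ U then -(field (nbar t) i) else 0)) t)) :=
  stmt17_general N s Rset U K ρ nU x n₀ hbid hρmem hρcover hρinj hρpair
end

section
/- Let (Ω, R, K) be a bidirectional kinetic system satisfying detailed balance, with reaction matrix 𝐑 and w(j) = log(K_{−R_j}/K_{R_j}). Fix n_0 ∈ ℝ_{≥0}^N and a vector J̄ ∈ ℝ^N supported on U. Then there exists at most one solution E ∈ ℝ^N of 𝐑^T E = w such that m^T e^{−E} = m^T n_0 + m^T J̄ for every m ∈ M = ker(𝐑^T). (Uniqueness of the energy/steady state compatible with prescribed totals.) -/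
open Finset

/-! Two solutions of `𝐑ᵀ E = w` differ by a conservation law `m = E₁ - E₂`. Testing the
prescribed totals against this `m` gives `∑ᵢ (E₁ i - E₂ i) (e^{-E₁ i} - e^{-E₂ i}) = 0`, and
since `x ↦ e^{-x}` is strictly decreasing every summand is `< 0` unless `E₁ i = E₂ i`. -/

section StrictAnti

variable {R : Type*} [Ring R] [LinearOrder R] [IsStrictOrderedRing R] {f : R → R}

theorem StrictAnti.sub_mul_sub_neg (hf : StrictAnti f) {a b : R} (hab : a ≠ b) :
    (a - b) * (f a - f b) < 0 := by
  rcases hab.lt_or_gt with h | h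
  · exact mul_neg_of_neg_of_pos (sub_neg.2 h) (sub_pos.2 (hf h))
  · exact mul_neg_of_pos_of_neg (sub_pos.2 h) (sub_neg.2 (hf h))

theorem StrictAnti.sub_mul_sub_nonpos (hf : StrictAnti f) (a b : R) :
    (a - b) * (f a - f b) ≤ 0 := by
  rcases eq_or_ne a b with rfl | hab
  · simp
  · exact (hf.sub_mul_sub_neg hab).le

theorem StrictAnti.eq_of_sum_sub_mul_sub_eq_zero {ι : Type*} [Fintype ι] (hf : StrictAnti f)
    {x y : ι → R} (h : ∑ i, (x i - y i) * (f (x i) - f (y i)) = 0) : x = y := by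
  have hzero := (sum_eq_zero_iff_of_nonpos fun i _ ↦ hf.sub_mul_sub_nonpos (x i) (y i)).1 h
  funext i
  by_contra hne
  exact (hf.sub_mul_sub_neg hne).ne (hzero i (mem_univ i))

end StrictAnti

theorem Real.strictAnti_exp_neg : StrictAnti fun x : ℝ ↦ Real.exp (-x) :=
  Real.exp_strictMono.comp_strictAnti fun _ _ h ↦ neg_lt_neg h

theorem stmt18_general (N s : ℕ) (K : (Fin N → ℤ) → ℝ)
    (ρ : Fin s → Fin N → ℤ)
    (n₀ Jbar : Fin N → ℝ)
    (E₁ E₂ : Fin N → ℝ)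
    (hE₁ : ∀ j : Fin s, Real.log (K (-(ρ j)) / K (ρ j)) = ∑ i, (ρ j i : ℝ) * E₁ i)
    (hE₂ : ∀ j : Fin s, Real.log (K (-(ρ j)) / K (ρ j)) = ∑ i, (ρ j i : ℝ) * E₂ i)
    (hm₁ : ∀ m : Fin N → ℝ, (∀ j : Fin s, ∑ i, m i * (ρ j i : ℝ) = 0) →
        ∑ i, m i * Real.exp (-(E₁ i)) = ∑ i, m i * (n₀ i + Jbar i))
    (hm₂ : ∀ m : Fin N → ℝ, (∀ j : Fin s, ∑ i, m i * (ρ j i : ℝ) = 0) →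
        ∑ i, m i * Real.exp (-(E₂ i)) = ∑ i, m i * (n₀ i + Jbar i)) :
    E₁ = E₂ := by
  have hker : ∀ j : Fin s, ∑ i, (E₁ i - E₂ i) * (ρ j i : ℝ) = 0 := fun j ↦ by
    simp only [sub_mul, sum_sub_distrib, mul_comm (E₁ _), mul_comm (E₂ _), ← hE₁ j, ← hE₂ j,
      sub_self]
  apply Real.strictAnti_exp_neg.eq_of_sum_sub_mul_sub_eq_zero
  simp only [mul_sub, sum_sub_distrib, hm₁ _ hker, hm₂ _ hker, sub_self]

/-- For a bidirectional kinetic system with detailed balance, given an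
initial state `n₀ ≥ 0` and an external-flux total `J̄` supported on `U`, there is at most one
solution `E` of `𝐑ᵀ E = w` (with `w j = log(K_{-ρ j}/K_{ρ j})`) such that
`mᵀ e^{-E} = mᵀ n₀ + mᵀ J̄` for every conservation law `m ∈ ker 𝐑ᵀ`. -/
theorem stmt18 (N s : ℕ) (Rset : Finset (Fin N → ℤ)) (K : (Fin N → ℤ) → ℝ)
    (ρ : Fin s → Fin N → ℤ) (U : Finset (Fin N))
    (h0 : ∀ R ∈ Rset, R ≠ 0)
    (hbid : ∀ R ∈ Rset, -R ∈ Rset)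
    (hK : ∀ R ∈ Rset, 0 < K R)
    (hmem : ∀ j, ρ j ∈ Rset)
    (n₀ Jbar : Fin N → ℝ)
    (hn₀ : ∀ i, 0 ≤ n₀ i)
    (hJ : ∀ i, i ∉ U → Jbar i = 0)
    (E₁ E₂ : Fin N → ℝ)
    (hE₁ : ∀ j : Fin s, Real.log (K (-(ρ j)) / K (ρ j)) = ∑ i, (ρ j i : ℝ) * E₁ i)
    (hE₂ : ∀ j : Fin s, Real.log (K (-(ρ j)) / K (ρ j)) = ∑ i, (ρ j i : ℝ) * E₂ i)
    (hm₁ : ∀ m : Fin N → ℝ, (∀ j : Fin s, ∑ i, m i * (ρ j i : ℝ) = 0) →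
        ∑ i, m i * Real.exp (-(E₁ i)) = ∑ i, m i * (n₀ i + Jbar i))
    (hm₂ : ∀ m : Fin N → ℝ, (∀ j : Fin s, ∑ i, m i * (ρ j i : ℝ) = 0) →
        ∑ i, m i * Real.exp (-(E₂ i)) = ∑ i, m i * (n₀ i + Jbar i)) :
    E₁ = E₂ :=
  stmt18_general N s K ρ n₀ Jbar E₁ E₂ hE₁ hE₂ hm₁ hm₂
end
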